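/- Caterpillars satisfy HK: for every caterpillar T and every k ≥ 1, there exists a leaf ℓ of T such that |I^k_T(v)| ≤ |I^k_T(ℓ)| for every vertex v of T. -/

import Mathlib

open scoped Classical

variable {V : Type*}

/-- `P = p 1, p 2, …, p n` is an escape path in `G` (from `p 1` to `p n`):
a path in `G` whose last vertex `p n` has degree 1 and whose vertices
`p i` for `2 ≤ i ≤ n - 2` have degree 2. -/
def IsEscapePath [Fintype V] (G : SimpleGraph V) (n : ℕ) (p : ℕ → V) : Prop :=
  1 ≤ n ∧ Set.InjOn p (Set.Icc 1 n) ∧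
  (∀ i, 1 ≤ i → i < n → G.Adj (p i) (p (i + 1))) ∧
  G.degree (p n) = 1 ∧
  ∀ i, 2 ≤ i → i ≤ n - 2 → G.degree (p i) = 2

/-- The flip of the path `p 1, …, p n`: it maps `p i` to `p (n + 1 - i)` and
fixes every vertex outside the path. -/
noncomputable def flipP (n : ℕ) (p : ℕ → V) : V → V := fun x =>
  if h : ∃ i, 1 ≤ i ∧ i ≤ n ∧ p i = x then p (n + 1 - h.choose) else x

/-- `s` is an independent set of `G`. -/
def IndepSet (G : SimpleGraph V) (s : Set V) : Prop :=
  ∀ x ∈ s, ∀ y ∈ s, x ≠ y → ¬ G.Adj x y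

/-- The star `I^k_G(u)`: the family of independent `k`-subsets of `G`
containing the vertex `u`. -/
noncomputable def star [Fintype V] (G : SimpleGraph V) (k : ℕ) (u : V) :
    Finset (Finset V) :=
  Finset.univ.filter
    (fun A : Finset V => A.card = k ∧ u ∈ A ∧
      ∀ x ∈ A, ∀ y ∈ A, x ≠ y → ¬ G.Adj x y)

/-- A caterpillar: a finite tree (on at least two vertices) such that deleting all
leaves (vertices of degree 1) and their incident edges yields a path graph. -/
def IsCaterpillar [Fintype V] (G : SimpleGraph V) : Prop :=
  G.IsTree ∧ 2 ≤ Fintype.card V ∧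
    ∃ m : ℕ,
      Nonempty ((G.induce {v : V | G.degree v ≠ 1}) ≃g SimpleGraph.pathGraph m)

/-!
Let `v = p 1, …, p n` be an escape path ending in a leaf `p n` that has no chords. Reversing it
(`flipP`) is an involution of the vertex set that maps every independent set containing `p 1` to
an independent set containing `p n`: the reversed path has the same edges, and an edge between the
path and the rest of the graph can only start at `p 1` or `p (n - 1)`, which are both excluded by
independence as soon as `p 1` is in the set. Hence `|I^k(p 1)| ≤ |I^k(p n)|`.

In a caterpillar every vertex `v` is the start of such a path: a shortest path to a leaf nearest
to `v`. It has no chords because it is a shortest path, and its inner vertices have no leaf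
neighbours, so all their neighbours lie on the spine, where degrees are at most `2`. Choosing `ℓ`
as a leaf with the largest star then proves the theorem.
-/

open SimpleGraph Finset

def IsChordless (G : SimpleGraph V) (n : ℕ) (p : ℕ → V) : Prop :=
  ∀ i ∈ Set.Icc 1 n, ∀ j ∈ Set.Icc 1 n, G.Adj (p i) (p j) → j = i + 1 ∨ i = j + 1

lemma mem_star_iff [Fintype V] {G : SimpleGraph V} {k : ℕ} {u : V} {A : Finset V} :
    A ∈ star G k u ↔ #A = k ∧ u ∈ A ∧ IndepSet G A := by
  simp [_root_.star, IndepSet]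

lemma SimpleGraph.two_le_degree_of_adj [Fintype V] {G : SimpleGraph V} {u x y : V}
    (hx : G.Adj u x) (hy : G.Adj u y) (hxy : x ≠ y) : 2 ≤ G.degree u := by
  rw [← card_neighborFinset_eq_degree, ← card_pair hxy]
  exact card_le_card fun z hz => by
    rcases mem_insert.mp hz with rfl | hz
    · simpa using hx
    · simpa [mem_singleton.mp hz] using hy

section Flip

variable {n : ℕ} {p : ℕ → V}

lemma flipP_apply_of_mem (hinj : Set.InjOn p (Set.Icc 1 n)) {i : ℕ} (hi : i ∈ Set.Icc 1 n) :
    flipP n p (p i) = p (n + 1 - i) := by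
  have hex : ∃ j, 1 ≤ j ∧ j ≤ n ∧ p j = p i := ⟨i, hi.1, hi.2, rfl⟩
  obtain ⟨h1, h2, heq⟩ := hex.choose_spec
  rw [flipP, dif_pos hex, hinj ⟨h1, h2⟩ hi heq]

lemma flipP_apply_of_notMem {x : V} (hx : ∀ i ∈ Set.Icc 1 n, p i ≠ x) : flipP n p x = x :=
  dif_neg fun ⟨i, h1, h2, h⟩ => hx i ⟨h1, h2⟩ h

lemma flipP_involutive (hinj : Set.InjOn p (Set.Icc 1 n)) : Function.Involutive (flipP n p) := by
  intro x
  by_cases hx : ∃ i ∈ Set.Icc 1 n, p i = x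
  · obtain ⟨i, hi, rfl⟩ := hx
    rw [flipP_apply_of_mem hinj hi, flipP_apply_of_mem hinj (by grind)]
    congr 1
    grind
  · push Not at hx
    rw [flipP_apply_of_notMem hx, flipP_apply_of_notMem hx]

end Flip

namespace IsEscapePath

variable [Fintype V] {G : SimpleGraph V} {n : ℕ} {p : ℕ → V}

lemma injOn (hp : IsEscapePath G n p) : Set.InjOn p (Set.Icc 1 n) :=
  hp.2.1

lemma degree_last (hp : IsEscapePath G n p) : G.degree (p n) = 1 :=
  hp.2.2.2.1

lemma adj_of_succ (hp : IsEscapePath G n p) {i j : ℕ} (hi : i ∈ Set.Icc 1 n)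
    (hj : j ∈ Set.Icc 1 n) (hij : j = i + 1 ∨ i = j + 1) : G.Adj (p i) (p j) := by
  obtain ⟨-, -, hadj, -⟩ := hp
  rcases hij with rfl | rfl
  · exact hadj i hi.1 (by grind)
  · exact (hadj j hj.1 (by grind)).symm

lemma exists_eq_of_adj (hp : IsEscapePath G n p) {j : ℕ} (hj : 2 ≤ j) (hjn : j ≤ n)
    (hj' : j ≠ n - 1) {x : V} (hx : G.Adj (p j) x) : ∃ i ∈ Set.Icc 1 n, p i = x := by
  rcases eq_or_lt_of_le hjn with rfl | hjn
  · have hprev : G.Adj (p j) (p (j - 1)) :=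
      hp.adj_of_succ ⟨by omega, le_rfl⟩ ⟨by omega, by omega⟩ (by omega)
    refine ⟨j - 1, ⟨by omega, by omega⟩, ?_⟩
    exact card_le_one.mp hp.degree_last.le _ ((mem_neighborFinset ..).mpr hprev) _
      ((mem_neighborFinset ..).mpr hx)
  · have hsub : {p (j - 1), p (j + 1)} ⊆ G.neighborFinset (p j) := by
      intro y hy
      rw [mem_neighborFinset]
      rcases mem_insert.mp hy with rfl | hy
      · exact hp.adj_of_succ ⟨by omega, by omega⟩ ⟨by omega, by omega⟩ (by omega)
      · rw [mem_singleton.mp hy]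
        exact hp.adj_of_succ ⟨by omega, by omega⟩ ⟨by omega, by omega⟩ (by omega)
    have hne : p (j - 1) ≠ p (j + 1) := fun h => by
      have := hp.injOn ⟨by omega, by omega⟩ ⟨by omega, by omega⟩ h
      omega
    have heq := eq_of_subset_of_card_le hsub <| by
      rw [card_pair hne, card_neighborFinset_eq_degree, hp.2.2.2.2 j hj (by omega)]
    have hmem : x ∈ ({p (j - 1), p (j + 1)} : Finset V) := by
      rw [heq, mem_neighborFinset]
      exact hx
    rcases mem_insert.mp hmem with rfl | hmem
    · exact ⟨j - 1, ⟨by omega, by omega⟩, rfl⟩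
    · exact ⟨j + 1, ⟨by omega, by omega⟩, (mem_singleton.mp hmem).symm⟩

variable {A : Finset V}

lemma not_adj_flipP_of_notMem (hp : IsEscapePath G n p) (hA : IndepSet G A) (h1 : p 1 ∈ A)
    {i : ℕ} (hi : i ∈ Set.Icc 1 n) (hiA : p i ∈ A) {b : V} (hbA : b ∈ A)
    (hb : ∀ j ∈ Set.Icc 1 n, p j ≠ b) : ¬ G.Adj (flipP n p (p i)) b := by
  have ⟨hi1, hin⟩ := hi
  intro hadj
  rw [flipP_apply_of_mem hp.injOn hi] at hadj
  by_cases hn : i = n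
  · subst hn
    rw [Nat.add_sub_cancel_left] at hadj
    exact hA _ h1 _ hbA (hb 1 ⟨le_rfl, hi1⟩) hadj
  by_cases h2 : i = 2
  · subst h2
    have h12 := hp.adj_of_succ ⟨le_rfl, by omega⟩ hi (by omega)
    exact hA _ h1 _ hiA h12.ne h12
  obtain ⟨j, hj, rfl⟩ := hp.exists_eq_of_adj (by omega) (by omega) (by omega) hadj
  exact hb j hj rfl

lemma not_adj_flipP (hp : IsEscapePath G n p) (hc : IsChordless G n p) (hA : IndepSet G A)
    (h1 : p 1 ∈ A) {a b : V} (ha : a ∈ A) (hb : b ∈ A) :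
    ¬ G.Adj (flipP n p a) (flipP n p b) := by
  by_cases hpa : ∃ i ∈ Set.Icc 1 n, p i = a <;> by_cases hpb : ∃ j ∈ Set.Icc 1 n, p j = b
  · obtain ⟨i, hi, rfl⟩ := hpa
    obtain ⟨j, hj, rfl⟩ := hpb
    rw [flipP_apply_of_mem hp.injOn hi, flipP_apply_of_mem hp.injOn hj]
    intro hadj
    have hij := hc _ ⟨by grind, by grind⟩ _ ⟨by grind, by grind⟩ hadj
    have hadj' := hp.adj_of_succ hi hj (by grind)
    exact hA _ ha _ hb hadj'.ne hadj'
  · push Not at hpb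
    obtain ⟨i, hi, rfl⟩ := hpa
    rw [flipP_apply_of_notMem hpb]
    exact hp.not_adj_flipP_of_notMem hA h1 hi ha hb hpb
  · push Not at hpa
    obtain ⟨j, hj, rfl⟩ := hpb
    rw [flipP_apply_of_notMem hpa]
    exact fun hadj => hp.not_adj_flipP_of_notMem hA h1 hj hb ha hpa hadj.symm
  · push Not at hpa hpb
    rw [flipP_apply_of_notMem hpa, flipP_apply_of_notMem hpb]
    exact fun hadj => hA _ ha _ hb hadj.ne hadj

lemma image_flipP_mem_star (hp : IsEscapePath G n p) (hc : IsChordless G n p) {k : ℕ}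
    (hA : A ∈ star G k (p 1)) : A.image (flipP n p) ∈ star G k (p n) := by
  obtain ⟨hcard, h1, hind⟩ := mem_star_iff.mp hA
  refine mem_star_iff.mpr ⟨?_, ?_, ?_⟩
  · rw [card_image_of_injective _ (flipP_involutive hp.injOn).injective, hcard]
  · have hflip : flipP n p (p 1) = p n := by
      rw [flipP_apply_of_mem hp.injOn ⟨le_rfl, hp.1⟩, Nat.add_sub_cancel]
    exact hflip ▸ mem_image_of_mem _ h1
  · intro x hx y hy _
    obtain ⟨a, ha, rfl⟩ := mem_image.mp hx
    obtain ⟨b, hb, rfl⟩ := mem_image.mp hy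
    exact hp.not_adj_flipP hc hind h1 ha hb

lemma card_star_le (hp : IsEscapePath G n p) (hc : IsChordless G n p) (k : ℕ) :
    #(star G k (p 1)) ≤ #(star G k (p n)) :=
  card_le_card_of_injOn (image (flipP n p)) (fun _ hA => hp.image_flipP_mem_star hc hA)
    ((image_injective (flipP_involutive hp.injOn).injective).injOn)

end IsEscapePath

section NearestLeaf

variable {G : SimpleGraph V}

lemma SimpleGraph.dist_le_dist_add_one_of_adj {u x y : V} (h : G.Adj x y) :
    G.dist u y ≤ G.dist u x + 1 :=
  (h.reachable.dist_triangle_right u).trans_eq (by rw [dist_eq_one_iff_adj.mpr h])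

lemma SimpleGraph.Walk.dist_getVert_of_length_eq_dist {u v : V} (w : G.Walk u v)
    (hw : w.length = G.dist u v) {i : ℕ} (hi : i ≤ w.length) : G.dist u (w.getVert i) = i := by
  have hle : G.dist u (w.getVert i) ≤ i := (dist_le (w.take i)).trans (by simp)
  have hdrop := dist_le (w.drop i)
  have htri := (w.drop i).reachable.dist_triangle_right u
  rw [Walk.drop_length] at hdrop
  omega

variable [Fintype V]

theorem exists_isEscapePath_isChordless (hconn : G.Connected) (hleaf : ∃ ℓ, G.degree ℓ = 1)
    (hdeg : ∀ u, (∀ x, G.Adj u x → G.degree x ≠ 1) → G.degree u ≤ 2) (v : V) :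
    ∃ n p, IsEscapePath G n p ∧ IsChordless G n p ∧ p 1 = v := by
  obtain ⟨ℓ, hℓ, hmin⟩ := exists_min_image ({x | G.degree x = 1} : Finset V) (G.dist v)
    (hleaf.imp fun _ h => by simpa using h)
  obtain ⟨w, hw⟩ := hconn.exists_walk_length_eq_dist v ℓ
  have hd : ∀ {i}, i ≤ w.length → G.dist v (w.getVert i) = i :=
    w.dist_getVert_of_length_eq_dist hw
  have hnotLeaf : ∀ x, G.dist v x < w.length → G.degree x ≠ 1 := fun x hx hx1 => by
    have := hmin x (by simpa using hx1)
    omega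
  refine ⟨w.length + 1, fun i => w.getVert (i - 1), ⟨by omega, ?_, ?_, ?_, ?_⟩, ?_, by simp⟩
  · intro a ha b hb hab
    have := congrArg (G.dist v) hab
    rw [hd (by grind), hd (by grind)] at this
    grind
  · intro i hi hin
    simpa [show i - 1 + 1 = i by omega] using w.adj_getVert_succ (i := i - 1) (by omega)
  · show G.degree (w.getVert (w.length + 1 - 1)) = 1
    rw [Nat.add_sub_cancel, w.getVert_length]
    simpa using hℓ
  · intro i hi hin
    refine le_antisymm (hdeg _ fun x hx => hnotLeaf x ?_) ?_
    · have := dist_le_dist_add_one_of_adj (u := v) hx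
      rw [hd (by omega)] at this
      omega
    · refine two_le_degree_of_adj (x := w.getVert (i - 2)) (y := w.getVert i) ?_ ?_ fun h => ?_
      · simpa [show i - 2 + 1 = i - 1 by omega] using
          (w.adj_getVert_succ (i := i - 2) (by omega)).symm
      · simpa [show i - 1 + 1 = i by omega] using w.adj_getVert_succ (i := i - 1) (by omega)
      · have := congrArg (G.dist v) h
        rw [hd (by omega), hd (by omega)] at this
        omega
  · intro i hi j hj hadj
    have hij := dist_le_dist_add_one_of_adj (u := v) hadj
    have hji := dist_le_dist_add_one_of_adj (u := v) hadj.symm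
    rw [hd (by grind), hd (by grind)] at hij hji
    have hne : i ≠ j := fun h => hadj.ne (by rw [h])
    grind

end NearestLeaf

lemma SimpleGraph.pathGraph_degree_le_two {m : ℕ} (a : Fin m) : (pathGraph m).degree a ≤ 2 := by
  rw [← card_neighborFinset_eq_degree]
  refine (card_le_card_of_injOn Fin.val (t := {a.val - 1, a.val + 1}) (fun b hb => ?_)
    Fin.val_injective.injOn).trans card_le_two
  simp only [coe_neighborFinset, mem_neighborSet, pathGraph_adj] at hb
  simp only [coe_insert, coe_singleton, Set.mem_insert_iff, Set.mem_singleton_iff]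
  omega

namespace IsCaterpillar

variable [Fintype V] {G : SimpleGraph V}

lemma connected (hG : IsCaterpillar G) : G.Connected :=
  hG.1.connected

lemma exists_degree_eq_one (hG : IsCaterpillar G) : ∃ ℓ, G.degree ℓ = 1 :=
  haveI := Fintype.one_lt_card_iff_nontrivial.mp hG.2.1
  hG.1.exists_vert_degree_one_of_nontrivial

lemma degree_le_two (hG : IsCaterpillar G) {u : V} (hu : ∀ x, G.Adj u x → G.degree x ≠ 1) :
    G.degree u ≤ 2 := by
  by_cases h : G.degree u = 1
  · omega
  obtain ⟨m, ⟨e⟩⟩ := hG.2.2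
  calc G.degree u
      ≤ (G.induce {v | G.degree v ≠ 1}).degree ⟨u, h⟩ := by
        rw [← card_neighborFinset_eq_degree, ← card_neighborFinset_eq_degree]
        refine card_le_card_of_surjOn Subtype.val fun x hx => ?_
        have hux : G.Adj u x := (mem_neighborFinset ..).mp hx
        exact ⟨⟨x, hu x hux⟩, (mem_neighborFinset ..).mpr hux, rfl⟩
    _ = (pathGraph m).degree (e ⟨u, h⟩) := (e.degree_eq _).symm
    _ ≤ 2 := pathGraph_degree_le_two _

end IsCaterpillar

theorem caterpillar_HK_general [Fintype V] (G : SimpleGraph V)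
    (hG : IsCaterpillar G) (k : ℕ) :
    ∃ ℓ : V, G.degree ℓ = 1 ∧
      ∀ v : V, (star G k v).card ≤ (star G k ℓ).card := by
  obtain ⟨ℓ, hℓ, hmax⟩ :=
    exists_max_image ({x | G.degree x = 1} : Finset V) (fun x => #(star G k x))
      (hG.exists_degree_eq_one.imp fun _ h => by simpa using h)
  refine ⟨ℓ, by simpa using hℓ, fun v => ?_⟩
  obtain ⟨n, p, hp, hc, rfl⟩ := exists_isEscapePath_isChordless hG.connected
    hG.exists_degree_eq_one (fun _ => hG.degree_le_two) v
  exact (hp.card_star_le hc k).trans (hmax _ (by simpa using hp.degree_last))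

/-- caterpillars satisfy HK: for every `k ≥ 1` there is a leaf `ℓ`
whose star `I^k_T(ℓ)` is at least as large as every star `I^k_T(v)`. -/
theorem caterpillar_HK [Fintype V] (G : SimpleGraph V)
    (hG : IsCaterpillar G) (k : ℕ) (hk : 1 ≤ k) :
    ∃ ℓ : V, G.degree ℓ = 1 ∧
      ∀ v : V, (star G k v).card ≤ (star G k ℓ).card :=
  caterpillar_HK_general G hG k
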